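/- arXiv:2311.15467 — 8 statements merged into one kernel-verified Lean document; each statement's English description precedes it below -/
import Mathlib

section
/- Let S be a compact connected subset of a metric space M. If S is locally LNE (every point of S has an open neighbourhood U in M such that S ∩ U is LNE), then S is LNE: there exists a constant L ≥ 1 such that d_inn^S(s,s') ≤ L · d(s,s') for all s, s' in S. -/
/-!
By compactness, finitely many of the LNE neighbourhoods cover `S`, and a Lebesgue number `δ` of
this cover yields a single constant `L` with `innerDist S x y ≤ L * dist x y` whenever
`dist x y < δ`. Connectedness (chains of `δ`-close points) makes the inner distance finite on `S`,
and a finite `δ`-net then bounds it on `S` by some `D`; pairs at distance at least `δ` satisfy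
`innerDist S x y ≤ (D / δ) * dist x y`.
-/

open Set Metric

/-- Length of a path `γ` parametrized by `[0,1]`, as the total variation on `[0,1]`. -/
noncomputable def pathLength {M : Type*} [PseudoEMetricSpace M] (γ : ℝ → M) : ENNReal :=
  eVariationOn γ (Set.Icc 0 1)

/-- Inner distance in a subset `S`: infimum of lengths of continuous paths in `S`
joining `x` and `y` (it is `∞` if there is no such path). -/
noncomputable def innerDist {M : Type*} [PseudoEMetricSpace M] (S : Set M) (x y : M) : ENNReal :=
  sInf {l : ENNReal | ∃ γ : ℝ → M, ContinuousOn γ (Set.Icc 0 1) ∧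
    Set.MapsTo γ (Set.Icc 0 1) S ∧ γ 0 = x ∧ γ 1 = y ∧ l = pathLength γ}

/-- `S` is Lipschitz normally embedded with constant `L`. -/
def IsLNEWith {M : Type*} [PseudoMetricSpace M] (L : ℝ) (S : Set M) : Prop :=
  ∀ ⦃x⦄, x ∈ S → ∀ ⦃y⦄, y ∈ S → innerDist S x y ≤ ENNReal.ofReal (L * dist x y)

/-- `S` is Lipschitz normally embedded. -/
def IsLNE {M : Type*} [PseudoMetricSpace M] (S : Set M) : Prop :=
  ∃ L : ℝ, 1 ≤ L ∧ IsLNEWith L S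

theorem image_two_mul_Icc_zero_half : (fun t : ℝ => 2 * t) '' Icc 0 (1 / 2) = Icc 0 1 := by
  rw [image_mul_left_Icc' two_pos]
  norm_num

theorem image_two_mul_sub_one_Icc_half_one :
    (fun t : ℝ => 2 * t - 1) '' Icc (1 / 2) 1 = Icc 0 1 := by
  simp_rw [sub_eq_add_neg]
  rw [image_affine_Icc' two_pos]
  norm_num

theorem mapsTo_two_mul_Icc_zero_half : MapsTo (fun t : ℝ => 2 * t) (Icc 0 (1 / 2)) (Icc 0 1) :=
  image_two_mul_Icc_zero_half ▸ mapsTo_image _ _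

theorem mapsTo_two_mul_sub_one_Icc_half_one :
    MapsTo (fun t : ℝ => 2 * t - 1) (Icc (1 / 2) 1) (Icc 0 1) :=
  image_two_mul_sub_one_Icc_half_one ▸ mapsTo_image _ _

theorem Icc_zero_half_union_Icc_half_one : Icc (0 : ℝ) (1 / 2) ∪ Icc (1 / 2) 1 = Icc 0 1 :=
  Icc_union_Icc_eq_Icc (by norm_num) (by norm_num)

section PathAppend

variable {M : Type*} {S : Set M} {γ₁ γ₂ : ℝ → M}

noncomputable def pathAppend (γ₁ γ₂ : ℝ → M) : ℝ → M :=
  fun t => if t ≤ 1 / 2 then γ₁ (2 * t) else γ₂ (2 * t - 1)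

theorem pathAppend_eqOn_left : EqOn (pathAppend γ₁ γ₂) (fun t => γ₁ (2 * t)) (Icc 0 (1 / 2)) :=
  fun _ ht => if_pos ht.2

theorem pathAppend_eqOn_right (h : γ₁ 1 = γ₂ 0) :
    EqOn (pathAppend γ₁ γ₂) (fun t => γ₂ (2 * t - 1)) (Icc (1 / 2) 1) := by
  intro t ht
  rcases ht.1.lt_or_eq with hlt | rfl
  · exact if_neg hlt.not_ge
  · norm_num [pathAppend, h]

theorem pathAppend_zero : pathAppend γ₁ γ₂ 0 = γ₁ 0 := by
  simp [pathAppend]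

theorem pathAppend_one : pathAppend γ₁ γ₂ 1 = γ₂ 1 := by
  norm_num [pathAppend]

theorem mapsTo_pathAppend (h : γ₁ 1 = γ₂ 0) (hm₁ : MapsTo γ₁ (Icc 0 1) S)
    (hm₂ : MapsTo γ₂ (Icc 0 1) S) : MapsTo (pathAppend γ₁ γ₂) (Icc 0 1) S := by
  rw [← Icc_zero_half_union_Icc_half_one, ← union_self S]
  exact ((hm₁.comp mapsTo_two_mul_Icc_zero_half).congr pathAppend_eqOn_left.symm).union_union
    ((hm₂.comp mapsTo_two_mul_sub_one_Icc_half_one).congr (pathAppend_eqOn_right h).symm)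

variable [PseudoEMetricSpace M]

theorem continuousOn_pathAppend (h : γ₁ 1 = γ₂ 0) (hc₁ : ContinuousOn γ₁ (Icc 0 1))
    (hc₂ : ContinuousOn γ₂ (Icc 0 1)) : ContinuousOn (pathAppend γ₁ γ₂) (Icc 0 1) := by
  rw [← Icc_zero_half_union_Icc_half_one]
  refine ContinuousOn.union_of_isClosed ?_ ?_ isClosed_Icc isClosed_Icc
  · exact (hc₁.comp (by fun_prop) mapsTo_two_mul_Icc_zero_half).congr pathAppend_eqOn_left
  · exact (hc₂.comp (by fun_prop) mapsTo_two_mul_sub_one_Icc_half_one).congr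
      (pathAppend_eqOn_right h)

theorem pathLength_pathAppend (h : γ₁ 1 = γ₂ 0) :
    pathLength (pathAppend γ₁ γ₂) = pathLength γ₁ + pathLength γ₂ := by
  have hsplit := eVariationOn.Icc_add_Icc (pathAppend γ₁ γ₂) (s := univ)
    (show (0 : ℝ) ≤ 1 / 2 by norm_num) (show (1 / 2 : ℝ) ≤ 1 by norm_num) (mem_univ _)
  simp only [univ_inter] at hsplit
  rw [pathLength, ← hsplit, eVariationOn.eq_of_eqOn pathAppend_eqOn_left,
    eVariationOn.eq_of_eqOn (pathAppend_eqOn_right h), ← Function.comp_def γ₁,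
    ← Function.comp_def γ₂,
    eVariationOn.comp_eq_of_monotoneOn γ₁ _ fun _ _ _ _ hab => by linarith,
    eVariationOn.comp_eq_of_monotoneOn γ₂ _ fun _ _ _ _ hab => by linarith,
    image_two_mul_Icc_zero_half, image_two_mul_sub_one_Icc_half_one, pathLength, pathLength]

end PathAppend

section InnerDist

variable {M : Type*} [PseudoEMetricSpace M] {S T : Set M} {γ : ℝ → M}

theorem innerDist_le_pathLength (hc : ContinuousOn γ (Icc 0 1)) (hm : MapsTo γ (Icc 0 1) S) :
    innerDist S (γ 0) (γ 1) ≤ pathLength γ :=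
  sInf_le ⟨γ, hc, hm, rfl, rfl, rfl⟩

theorem innerDist_mono (h : S ⊆ T) (x y : M) : innerDist T x y ≤ innerDist S x y :=
  sInf_le_sInf fun _ ⟨γ, hc, hm, h0, h1, hl⟩ => ⟨γ, hc, hm.mono_right h, h0, h1, hl⟩

theorem innerDist_self {x : M} (hx : x ∈ S) : innerDist S x x = 0 :=
  nonpos_iff_eq_zero.1 <| (innerDist_le_pathLength (γ := fun _ => x) continuousOn_const
    fun _ _ => hx).trans_eq (eVariationOn.constant_on (by simp))

theorem pathLength_comp_one_sub (γ : ℝ → M) : pathLength (fun t => γ (1 - t)) = pathLength γ := by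
  rw [pathLength, ← Function.comp_def,
    eVariationOn.comp_eq_of_antitoneOn γ _ fun _ _ _ _ h => sub_le_sub_left h 1]
  simp [pathLength]

theorem innerDist_comm (S : Set M) (x y : M) : innerDist S x y = innerDist S y x := by
  suffices h : ∀ x y, innerDist S y x ≤ innerDist S x y from le_antisymm (h y x) (h x y)
  refine fun x y => le_sInf fun _ ⟨γ, hc, hm, h0, h1, hl⟩ => ?_
  have hflip : MapsTo (fun t : ℝ => 1 - t) (Icc 0 1) (Icc 0 1) := by
    simpa using mapsTo_image (fun t : ℝ => 1 - t) (Icc 0 1)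
  have := innerDist_le_pathLength (S := S) (γ := fun t => γ (1 - t))
    (hc.comp (continuous_const.sub continuous_id).continuousOn hflip) (hm.comp hflip)
  simpa [h0, h1, pathLength_comp_one_sub, hl] using this

theorem innerDist_triangle (S : Set M) (x y z : M) :
    innerDist S x z ≤ innerDist S x y + innerDist S y z := by
  simp only [innerDist, ENNReal.sInf_add, ENNReal.add_sInf]
  refine le_iInf₂ fun _ ⟨γ₂, hc₂, hm₂, h₂0, h₂1, hl₂⟩ =>
    le_iInf₂ fun _ ⟨γ₁, hc₁, hm₁, h₁0, h₁1, hl₁⟩ => ?_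
  have h : γ₁ 1 = γ₂ 0 := h₁1.trans h₂0.symm
  refine sInf_le ⟨pathAppend γ₁ γ₂, continuousOn_pathAppend h hc₁ hc₂, mapsTo_pathAppend h hm₁ hm₂,
    pathAppend_zero.trans h₁0, pathAppend_one.trans h₂1, ?_⟩
  rw [pathLength_pathAppend h, hl₁, hl₂, add_comm]

end InnerDist

section LNE

variable {M : Type*} [PseudoMetricSpace M] {S : Set M} {L δ : ℝ}

def IsLNEWithAtScale (L δ : ℝ) (S : Set M) : Prop :=
  ∀ ⦃x⦄, x ∈ S → ∀ ⦃y⦄, y ∈ S → dist x y < δ → innerDist S x y ≤ ENNReal.ofReal (L * dist x y)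

theorem IsCompact.exists_isLNEWithAtScale (hS : IsCompact S)
    (hloc : ∀ s ∈ S, ∃ U : Set M, IsOpen U ∧ s ∈ U ∧ IsLNE (S ∩ U)) :
    ∃ L, 1 ≤ L ∧ ∃ δ > 0, IsLNEWithAtScale L δ S := by
  choose! U hUo hsU L _ hL using hloc
  obtain ⟨t, htS, hcover⟩ := hS.elim_nhds_subcover U fun s hs => (hUo s hs).mem_nhds (hsU s hs)
  obtain ⟨δ, hδ, hball⟩ := lebesgue_number_lemma_of_metric (c := fun s : t => U s) hS
    (fun s => hUo s (htS s s.2)) (by simpa only [iUnion_subtype] using hcover)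
  obtain ⟨L₀, hL₀⟩ := (t.image L).exists_le
  refine ⟨max 1 L₀, le_max_left _ _, δ, hδ, fun x hx y hy hxy => ?_⟩
  obtain ⟨⟨s, hst⟩, hs⟩ := hball x hx
  calc innerDist S x y ≤ innerDist (S ∩ U s) x y := innerDist_mono inter_subset_left x y
    _ ≤ ENNReal.ofReal (L s * dist x y) :=
      hL s (htS s hst) ⟨hx, hs (mem_ball_self hδ)⟩ ⟨hy, hs (mem_ball'.2 hxy)⟩
    _ ≤ ENNReal.ofReal (max 1 L₀ * dist x y) := by
      gcongr
      exact (hL₀ _ (Finset.mem_image_of_mem L hst)).trans (le_max_right _ _)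

theorem IsLNEWithAtScale.innerDist_ne_top (h : IsLNEWithAtScale L δ S) (hδ : 0 < δ)
    (hS : IsPreconnected S) {x y : M} (hx : x ∈ S) (hy : y ∈ S) : innerDist S x y ≠ ⊤ := by
  refine hS.induction₂' (fun x y => innerDist S x y ≠ ⊤) (fun x hx => ?_)
    (fun x y z _ _ _ hxy hyz => ?_) hx hy
  · filter_upwards [mem_nhdsWithin_of_mem_nhds (ball_mem_nhds x hδ), self_mem_nhdsWithin]
      with y hxy hy
    have hfin := ne_top_of_le_ne_top ENNReal.ofReal_ne_top (h hx hy (mem_ball'.1 hxy))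
    exact ⟨hfin, innerDist_comm S x y ▸ hfin⟩
  · exact ne_top_of_le_ne_top (ENNReal.add_ne_top.2 ⟨hxy, hyz⟩) (innerDist_triangle S x y z)

theorem IsLNEWithAtScale.exists_innerDist_le (h : IsLNEWithAtScale L δ S) (hS : IsCompact S)
    (hL : 0 ≤ L) (hδ : 0 < δ) (hfin : ∀ x ∈ S, ∀ y ∈ S, innerDist S x y ≠ ⊤) :
    ∃ D : ℝ, ∀ x ∈ S, ∀ y ∈ S, innerDist S x y ≤ ENNReal.ofReal D := by
  obtain ⟨t, htS, hcover⟩ := hS.elim_nhds_subcover (ball · δ) fun x _ => ball_mem_nhds x hδ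
  set D₀ := (t ×ˢ t).sup fun p => innerDist S p.1 p.2
  have hD₀ : D₀ ≠ ⊤ := ((Finset.sup_lt_iff bot_lt_top).2 fun p hp =>
    (hfin _ (htS _ (Finset.mem_product.1 hp).1) _ (htS _ (Finset.mem_product.1 hp).2)).lt_top).ne
  have hnear : ∀ x ∈ S, ∃ a ∈ t, innerDist S x a ≤ ENNReal.ofReal (L * δ) := by
    intro x hx
    obtain ⟨a, ha, hxa⟩ := mem_iUnion₂.1 (hcover hx)
    refine ⟨a, ha, (h hx (htS a ha) (mem_ball.1 hxa)).trans ?_⟩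
    gcongr
    exact (mem_ball.1 hxa).le
  refine ⟨(ENNReal.ofReal (L * δ) + D₀ + ENNReal.ofReal (L * δ)).toReal, fun x hx y hy => ?_⟩
  obtain ⟨a, ha, hxa⟩ := hnear x hx
  obtain ⟨b, hb, hyb⟩ := hnear y hy
  rw [ENNReal.ofReal_toReal (by finiteness)]
  calc innerDist S x y ≤ innerDist S x a + innerDist S a b + innerDist S b y :=
        (innerDist_triangle S x b y).trans (add_le_add_left (innerDist_triangle S x a b) _)
    _ ≤ ENNReal.ofReal (L * δ) + D₀ + ENNReal.ofReal (L * δ) := by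
      rw [innerDist_comm S b y]
      gcongr
      exact Finset.le_sup (f := fun p => innerDist S p.1 p.2) (b := (a, b))
        (Finset.mem_product.2 ⟨ha, hb⟩)

theorem IsLNEWithAtScale.isLNE (h : IsLNEWithAtScale L δ S) (hL : 1 ≤ L) (hδ : 0 < δ) {D : ℝ}
    (hD : ∀ x ∈ S, ∀ y ∈ S, innerDist S x y ≤ ENNReal.ofReal D) : IsLNE S := by
  refine ⟨max L (D / δ), le_max_of_le_left hL, fun x hx y hy => ?_⟩
  rcases lt_or_ge (dist x y) δ with hxy | hxy
  · refine (h hx hy hxy).trans ?_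
    gcongr
    exact le_max_left _ _
  · refine (hD x hx y hy).trans (ENNReal.ofReal_le_ofReal ?_)
    calc D ≤ max L (D / δ) * δ := (div_le_iff₀ hδ).1 (le_max_right _ _)
      _ ≤ max L (D / δ) * dist x y := by gcongr

end LNE

/-- a compact connected locally LNE subset is LNE. -/
theorem locallyLNE_implies_LNE {M : Type*} [MetricSpace M] (S : Set M)
    (hcomp : IsCompact S) (hconn : IsConnected S)
    (hloc : ∀ s ∈ S, ∃ U : Set M, IsOpen U ∧ s ∈ U ∧ IsLNE (S ∩ U)) :
    IsLNE S := by
  obtain ⟨L, hL, δ, hδ, hscale⟩ := hcomp.exists_isLNEWithAtScale hloc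
  have hfin : ∀ x ∈ S, ∀ y ∈ S, innerDist S x y ≠ ⊤ := fun x hx y hy =>
    hscale.innerDist_ne_top hδ hconn.isPreconnected hx hy
  obtain ⟨D, hD⟩ := hscale.exists_innerDist_le hcomp (zero_le_one.trans hL) hδ hfin
  exact hscale.isLNE hL hδ hD
end

section
/- Let x_j and x_k be nonzero vectors in a real inner product space with norms r_j, r_k, and let 2α ∈ [0,π] be the angle between them. Then (r_j + r_k) sin α ≤ |x_j − x_k| ≤ r_j + r_k. -/
/-!
Writing `cos θ = cos² (θ/2) - sin² (θ/2)` in the law of cosines gives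
`‖x - y‖² = (‖x‖ + ‖y‖)² sin² (θ/2) + (‖x‖ - ‖y‖)² cos² (θ/2)`; dropping the second square
gives the lower bound, and the upper bound is the triangle inequality.
-/

open Set Metric

namespace InnerProductGeometry

variable {E : Type*} [NormedAddCommGroup E] [InnerProductSpace ℝ E]

theorem norm_sub_sq_eq_half_angle (x y : E) :
    ‖x - y‖ ^ 2 = ((‖x‖ + ‖y‖) * Real.sin (angle x y / 2)) ^ 2 +
      ((‖x‖ - ‖y‖) * Real.cos (angle x y / 2)) ^ 2 := by
  have hcos : Real.cos (angle x y) =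
      Real.cos (angle x y / 2) ^ 2 - Real.sin (angle x y / 2) ^ 2 := by
    rw [← Real.cos_two_mul', mul_div_cancel₀ _ two_ne_zero]
  rw [sq ‖x - y‖, norm_sub_sq_eq_norm_sq_add_norm_sq_sub_two_mul_norm_mul_norm_mul_cos_angle, hcos]
  linear_combination -(‖x‖ ^ 2 + ‖y‖ ^ 2) * Real.sin_sq_add_cos_sq (angle x y / 2)

theorem mul_sin_half_angle_le_norm_sub (x y : E) :
    (‖x‖ + ‖y‖) * Real.sin (angle x y / 2) ≤ ‖x - y‖ := by
  refine (le_abs_self _).trans (abs_le_of_sq_le_sq ?_ (norm_nonneg _))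
  rw [norm_sub_sq_eq_half_angle x y]
  exact le_add_of_nonneg_right (sq_nonneg _)

end InnerProductGeometry

theorem norm_sub_bounds_angle_general {E : Type*} [NormedAddCommGroup E] [InnerProductSpace ℝ E]
    (x y : E) :
    (‖x‖ + ‖y‖) * Real.sin (InnerProductGeometry.angle x y / 2) ≤ ‖x - y‖ ∧
      ‖x - y‖ ≤ ‖x‖ + ‖y‖ :=
  ⟨InnerProductGeometry.mul_sin_half_angle_le_norm_sub x y, norm_sub_le x y⟩

/-- (|x|+|y|) sin α ≤ |x−y| ≤ |x|+|y| where 2α is the angle between x and y. -/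
theorem norm_sub_bounds_angle {E : Type*} [NormedAddCommGroup E] [InnerProductSpace ℝ E]
    (x y : E) (hx : x ≠ 0) (hy : y ≠ 0) :
    (‖x‖ + ‖y‖) * Real.sin (InnerProductGeometry.angle x y / 2) ≤ ‖x - y‖ ∧
      ‖x - y‖ ≤ ‖x‖ + ‖y‖ :=
  norm_sub_bounds_angle_general x y
end

section
/- Let x_j, x_k be nonzero vectors in a real inner product space with r_j = |x_j|, r_k = |x_k|, and suppose |x_j/r_j − x_k/r_k| ≥ δ/2 for some δ ∈ (0,2]. Then (δ/4)·(r_j + r_k) ≤ |x_j − x_k|; in particular |x_j| ≤ (4/δ)·|x_j − x_k| and |x_k| ≤ (4/δ)·|x_j − x_k|. -/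
open Set Metric

/-! With `u`, `v` the normalizations of `x`, `y`, the law of cosines gives
`‖x - y‖² = (‖x‖ - ‖y‖)² + ‖x‖‖y‖‖u - v‖²`; comparing termwise with
`(‖x‖ + ‖y‖)² = (‖x‖ - ‖y‖)² + 4‖x‖‖y‖` bounds `‖x - y‖` below by a multiple of `‖x‖ + ‖y‖`. -/

section InnerProductSpace

variable {E : Type*} [NormedAddCommGroup E] [InnerProductSpace ℝ E]

theorem norm_sub_sq_eq_sq_sub_add_mul_sq_normalize_sub (x y : E) :
    ‖x - y‖ ^ 2 = (‖x‖ - ‖y‖) ^ 2 + ‖x‖ * ‖y‖ * ‖‖x‖⁻¹ • x - ‖y‖⁻¹ • y‖ ^ 2 := by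
  rcases eq_or_ne x 0 with rfl | hx
  · simp
  rcases eq_or_ne y 0 with rfl | hy
  · simp
  have ha : ‖x‖ ≠ 0 := norm_ne_zero_iff.mpr hx
  have hb : ‖y‖ ≠ 0 := norm_ne_zero_iff.mpr hy
  rw [norm_sub_sq_real, norm_sub_sq_real, norm_smul, norm_smul, real_inner_smul_left,
    real_inner_smul_right, Real.norm_of_nonneg (inv_nonneg.mpr (norm_nonneg x)),
    Real.norm_of_nonneg (inv_nonneg.mpr (norm_nonneg y))]
  field_simp
  ring

theorem half_mul_norm_add_le_norm_sub {x y : E} {c : ℝ} (hc0 : 0 ≤ c) (hc2 : c ≤ 2)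
    (h : c ≤ ‖‖x‖⁻¹ • x - ‖y‖⁻¹ • y‖) :
    c / 2 * (‖x‖ + ‖y‖) ≤ ‖x - y‖ := by
  have hxy := norm_sub_sq_eq_sq_sub_add_mul_sq_normalize_sub x y
  have hab : 0 ≤ ‖x‖ * ‖y‖ := by positivity
  have hc_sq : c ^ 2 ≤ ‖‖x‖⁻¹ • x - ‖y‖⁻¹ • y‖ ^ 2 := pow_le_pow_left₀ hc0 h 2
  refine (pow_le_pow_iff_left₀ (by positivity) (norm_nonneg _) two_ne_zero).mp ?_
  calc (c / 2 * (‖x‖ + ‖y‖)) ^ 2 = (c / 2) ^ 2 * (‖x‖ - ‖y‖) ^ 2 + ‖x‖ * ‖y‖ * c ^ 2 := by ring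
    _ ≤ (‖x‖ - ‖y‖) ^ 2 + ‖x‖ * ‖y‖ * ‖‖x‖⁻¹ • x - ‖y‖⁻¹ • y‖ ^ 2 := by
      have hc_half : (c / 2) ^ 2 ≤ 1 := pow_le_one₀ (by positivity) (by linarith)
      exact add_le_add (mul_le_of_le_one_left (sq_nonneg _) hc_half)
        (mul_le_mul_of_nonneg_left hc_sq hab)
    _ = ‖x - y‖ ^ 2 := hxy.symm

end InnerProductSpace

theorem norm_sub_of_normalized_far_general {E : Type*} [NormedAddCommGroup E]
    [InnerProductSpace ℝ E] (x y : E)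
    (δ : ℝ) (hδ0 : 0 < δ) (hδ2 : δ ≤ 2)
    (h : δ / 2 ≤ ‖‖x‖⁻¹ • x - ‖y‖⁻¹ • y‖) :
    δ / 4 * (‖x‖ + ‖y‖) ≤ ‖x - y‖ ∧
      ‖x‖ ≤ 4 / δ * ‖x - y‖ ∧ ‖y‖ ≤ 4 / δ * ‖x - y‖ := by
  have key : δ / 4 * (‖x‖ + ‖y‖) ≤ ‖x - y‖ := by
    have := half_mul_norm_add_le_norm_sub (by positivity) (by linarith) h
    rwa [div_div, show (2 : ℝ) * 2 = 4 by norm_num] at this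
  refine ⟨key, ?_, ?_⟩
  · rw [div_mul_eq_mul_div, le_div_iff₀ hδ0]
    nlinarith [norm_nonneg y]
  · rw [div_mul_eq_mul_div, le_div_iff₀ hδ0]
    nlinarith [norm_nonneg x]

/-- if the normalizations of x and y are at distance at least δ/2,
then (δ/4)(|x|+|y|) ≤ |x−y|, and in particular |x|,|y| ≤ (4/δ)|x−y|. -/
theorem norm_sub_of_normalized_far {E : Type*} [NormedAddCommGroup E]
    [InnerProductSpace ℝ E] (x y : E) (hx : x ≠ 0) (hy : y ≠ 0)
    (δ : ℝ) (hδ0 : 0 < δ) (hδ2 : δ ≤ 2)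
    (h : δ / 2 ≤ ‖‖x‖⁻¹ • x - ‖y‖⁻¹ • y‖) :
    δ / 4 * (‖x‖ + ‖y‖) ≤ ‖x - y‖ ∧
      ‖x‖ ≤ 4 / δ * ‖x - y‖ ∧ ‖y‖ ≤ 4 / δ * ‖x - y‖ :=
  norm_sub_of_normalized_far_general x y δ hδ0 hδ2 h
end

section
/- Let N₁, ..., N_s be C¹ submanifold germs of ℝ^n at the origin of positive dimension and codimension, each realized near 0 as the graph of a C¹ map G_j : T_j ∩ B → T_j^⊥ with G_j(0)=0 and DG_j(0)=0, where T_j is the tangent space of N_j at 0. Suppose their union Y has an isolated singularity at 0 (the N_j are pairwise disjoint away from 0 near 0). If there exist indices j ≠ k with T_j ∩ T_k ≠ {0}, then Y is not locally LNE at 0: for every neighbourhood U of 0, the set Y ∩ U is not LNE. -/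
open Set Metric

/-!
Take a nonzero `a ∈ T j ∩ T k` close to `0`. The points `p = a + G_j a ∈ N_j` and
`q = a + G_k a ∈ N_k` are at distance `‖G_j a - G_k a‖ = o(‖a‖)`, since both graphs are tangent
to their base at `0`. On the other hand a path from `p` to `q` in `Y` either passes through `0`
or leaves a ball of radius comparable to `‖a‖`: otherwise its image would be a connected subset
of `Y \ {0}` near `0`, which is the disjoint union of the closed pieces of the `N_i`, and it
would meet two of them. So the inner distance between `p` and `q` is at least `‖a‖`.
-/

open Filter Topology Asymptotics

lemma not_isLNE_of_forall_exists_dist_le {M : Type*} [PseudoMetricSpace M] {S : Set M}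
    (h : ∀ ε > 0, ∃ x ∈ S, ∃ y ∈ S, ∃ c > 0,
      ENNReal.ofReal c ≤ innerDist S x y ∧ dist x y ≤ ε * c) :
    ¬ IsLNE S := by
  rintro ⟨L, hL, hLNE⟩
  obtain ⟨x, hx, y, hy, c, hc, hinner, hdist⟩ := h (1 / (2 * L)) (by positivity)
  have hc2 : c ≤ L * dist x y :=
    (ENNReal.ofReal_le_ofReal_iff (by positivity)).1 (hinner.trans (hLNE hx hy))
  have hc3 : L * dist x y ≤ c / 2 := calc
    L * dist x y ≤ L * (1 / (2 * L) * c) := by gcongr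
    _ = c / 2 := by field_simp
  linarith

lemma IsPreconnected.subset_of_mem_of_pairwise_inter_eq_empty {X ι : Type*}
    [TopologicalSpace X] [Finite ι] {s : Set X} {K : ι → Set X} (hs : IsPreconnected s)
    (hK : ∀ i, IsClosed (K i)) (hsK : s ⊆ ⋃ i, K i)
    (hdisj : ∀ i i', i ≠ i' → s ∩ (K i ∩ K i') = ∅) {i : ι} {x : X} (hx : x ∈ s)
    (hxi : x ∈ K i) : s ⊆ K i := by
  set D := ⋃ i' ∈ ({i}ᶜ : Set ι), K i'
  have hD : IsClosed D := (toFinite _).isClosed_biUnion fun i' _ => hK i'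
  have hsep : s ∩ (K i ∩ D) = ∅ := eq_empty_of_forall_notMem fun y ⟨hy, hyi, hyD⟩ => by
    obtain ⟨i', hi', hyi'⟩ := mem_iUnion₂.1 hyD
    exact (hdisj i i' (Ne.symm hi')).subset ⟨hy, hyi, hyi'⟩
  refine (isPreconnected_iff_subset_of_disjoint_closed.1 hs _ _ (hK i) hD ?_ hsep).resolve_right
    fun hsD => hsep.subset ⟨hx, hxi, hsD hx⟩
  intro y hy
  obtain ⟨i', hi'⟩ := mem_iUnion.1 (hsK hy)
  by_cases h : i' = i
  · exact .inl (h ▸ hi')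
  · exact .inr (mem_biUnion h hi')

lemma ofReal_min_le_innerDist {E ι : Type*} [NormedAddCommGroup E] [Finite ι] {S : Set E}
    {K : ι → Set E} {ρ : ℝ} (hK : ∀ i, IsClosed (K i)) (hS : S ∩ ball 0 ρ ⊆ ⋃ i, K i)
    (hKK : ∀ i i', i ≠ i' → K i ∩ K i' ⊆ {0}) {i : ι} {p q : E} (hp : p ∈ K i) (hq : q ∉ K i) :
    ENNReal.ofReal (min ‖p‖ (ρ - ‖p‖)) ≤ innerDist S p q := by
  refine le_sInf ?_
  rintro _ ⟨γ, hγ, hγS, rfl, rfl, rfl⟩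
  have hlen : ∀ u ∈ Icc (0 : ℝ) 1, ENNReal.ofReal ‖γ u - γ 0‖ ≤ pathLength γ := fun u hu => by
    rw [← dist_eq_norm, ← edist_dist, edist_comm]
    exact eVariationOn.edist_le γ (left_mem_Icc.2 zero_le_one) hu
  by_cases h0 : ∃ u ∈ Icc (0 : ℝ) 1, γ u = 0
  · obtain ⟨u, hu, hγu⟩ := h0
    refine le_trans (ENNReal.ofReal_le_ofReal ?_) (hlen u hu)
    simp [hγu]
  by_cases hρ : ∃ u ∈ Icc (0 : ℝ) 1, ρ ≤ ‖γ u‖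
  · obtain ⟨u, hu, hγu⟩ := hρ
    refine le_trans (ENNReal.ofReal_le_ofReal ?_) (hlen u hu)
    have := norm_sub_norm_le (γ u) (γ 0)
    exact (min_le_right _ _).trans (by linarith)
  push Not at h0 hρ
  have hsK : γ '' Icc 0 1 ⊆ ⋃ i, K i := by
    rintro _ ⟨u, hu, rfl⟩
    exact hS ⟨hγS hu, mem_ball_zero_iff.2 (hρ u hu)⟩
  have hdisj : ∀ i i', i ≠ i' → γ '' Icc 0 1 ∩ (K i ∩ K i') = ∅ := fun i i' h => by
    refine eq_empty_of_forall_notMem ?_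
    rintro _ ⟨⟨u, hu, rfl⟩, hx⟩
    exact h0 u hu (hKK i i' h hx)
  exact absurd ((isPreconnected_Icc.image γ hγ).subset_of_mem_of_pairwise_inter_eq_empty hK hsK
    hdisj (mem_image_of_mem γ (left_mem_Icc.2 zero_le_one)) hp
    (mem_image_of_mem γ (right_mem_Icc.2 zero_le_one))) hq

lemma isLittleO_id_of_fderiv_eq_zero {E F : Type*} [NormedAddCommGroup E] [NormedSpace ℝ E]
    [NormedAddCommGroup F] [NormedSpace ℝ F] {g : E → F} (hg : DifferentiableAt ℝ g 0)
    (hg0 : g 0 = 0) (hdg : fderiv ℝ g 0 = 0) : g =o[𝓝 0] id := by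
  refine (hasFDerivAt_iff_isLittleO_nhds_zero.1 (hdg ▸ hg.hasFDerivAt)).congr_left fun h => ?_
  simp [hg0]

lemma Submodule.exists_mem_ne_zero_of_eventually {E : Type*} [NormedAddCommGroup E]
    [NormedSpace ℝ E] {W : Submodule ℝ E} (hW : W ≠ ⊥) {P : E → Prop}
    (hP : ∀ᶠ x in 𝓝 0, P x) : ∃ a ∈ W, a ≠ 0 ∧ P a := by
  obtain ⟨w, hw, hw0⟩ := W.exists_mem_ne_zero_of_ne_bot hW
  have hray : Tendsto (fun t : ℝ => t • w) (𝓝[>] 0) (𝓝 0) :=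
    ((continuous_id.smul continuous_const).tendsto' (0 : ℝ) 0 (zero_smul ℝ w)).mono_left
      nhdsWithin_le_nhds
  obtain ⟨t, ht, hPt⟩ := (eventually_mem_nhdsWithin.and (hray.eventually hP)).exists
  exact ⟨t • w, W.smul_mem t hw, smul_ne_zero (ne_of_gt ht) hw0, hPt⟩

section Graph

variable {E : Type*} [NormedAddCommGroup E] [InnerProductSpace ℝ E]

/-- For `g` with values in `Vᗮ`, this is the graph of `g` over `V ∩ B` inside `V ⊕ Vᗮ`. -/
def graphOver (V : Submodule ℝ E) (g : E → E) (B : Set E) : Set E :=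
  (fun t => t + g t) '' ((V : Set E) ∩ B)

lemma norm_le_norm_add_of_mem_orthogonal {V : Submodule ℝ E} {a b : E} (ha : a ∈ V)
    (hb : b ∈ Vᗮ) : ‖a‖ ≤ ‖a + b‖ := by
  rw [mul_self_le_mul_self_iff (norm_nonneg _) (norm_nonneg _),
    norm_add_sq_eq_norm_sq_add_norm_sq_real ((Submodule.mem_orthogonal V b).1 hb a ha)]
  exact le_add_of_nonneg_right (mul_self_nonneg _)

lemma isClosed_graphOver_closedBall [FiniteDimensional ℝ E] (V : Submodule ℝ E) {g : E → E}
    (hg : Continuous g) (ρ : ℝ) : IsClosed (graphOver V g (closedBall 0 ρ)) :=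
  ((isCompact_closedBall 0 ρ).inter_left V.closed_of_finiteDimensional).image
    (continuous_id.add hg) |>.isClosed

lemma graphOver_inter_closedBall_subset {V : Submodule ℝ E} {g : E → E} (hg : ∀ t, g t ∈ Vᗮ)
    (B : Set E) (ρ : ℝ) : graphOver V g B ∩ closedBall 0 ρ ⊆ graphOver V g (closedBall 0 ρ) := by
  rintro _ ⟨⟨t, ⟨htV, -⟩, rfl⟩, hρ⟩
  rw [mem_closedBall_zero_iff] at hρ
  exact ⟨t, ⟨htV, mem_closedBall_zero_iff.2
    ((norm_le_norm_add_of_mem_orthogonal htV (hg t)).trans hρ)⟩, rfl⟩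

lemma ofReal_norm_le_innerDist_graphOver [FiniteDimensional ℝ E] {ι : Type*} [Finite ι]
    {T : ι → Submodule ℝ E} {G : ι → E → E} (hG : ∀ i, Continuous (G i))
    (hGperp : ∀ i t, G i t ∈ (T i)ᗮ) {r : ℝ}
    (hiso : ∀ i i', i ≠ i' →
      graphOver (T i) (G i) (ball 0 r) ∩ graphOver (T i') (G i') (ball 0 r) ⊆ {0})
    {S : Set E} (hS : S ⊆ ⋃ i, graphOver (T i) (G i) (ball 0 r)) {j k : ι} (hjk : j ≠ k)
    {a : E} (haj : a ∈ T j) (hak : a ∈ T k) (ha0 : a ≠ 0) (hr : ‖a + G j a‖ + ‖a‖ < r) :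
    ENNReal.ofReal ‖a‖ ≤ innerDist S (a + G j a) (a + G k a) := by
  set ρ := ‖a + G j a‖ + ‖a‖ with hρ
  have hpa : ‖a‖ ≤ ‖a + G j a‖ := norm_le_norm_add_of_mem_orthogonal haj (hGperp j a)
  have hKr : ∀ i, graphOver (T i) (G i) (closedBall 0 ρ) ⊆ graphOver (T i) (G i) (ball 0 r) :=
    fun i => image_mono (inter_subset_inter_right _ (closedBall_subset_ball hr))
  have hq : a + G k a ∉ graphOver (T j) (G j) (closedBall 0 ρ) := fun hqj => by
    have hqk : a + G k a ∈ graphOver (T k) (G k) (ball 0 r) :=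
      ⟨a, ⟨hak, mem_ball_zero_iff.2 (by linarith [norm_nonneg (a + G j a)])⟩, rfl⟩
    have hq0 : a + G k a = 0 := hiso j k hjk ⟨hKr j hqj, hqk⟩
    have hqa := norm_le_norm_add_of_mem_orthogonal hak (hGperp k a)
    rw [hq0, norm_zero] at hqa
    exact ha0 (norm_le_zero_iff.1 hqa)
  refine le_trans (ENNReal.ofReal_le_ofReal (le_min hpa (by linarith)))
    (ofReal_min_le_innerDist (ρ := ρ) (fun i => isClosed_graphOver_closedBall (T i) (hG i) ρ) ?_
      (fun i i' h => (inter_subset_inter (hKr i) (hKr i')).trans (hiso i i' h))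
      ⟨a, ⟨haj, mem_closedBall_zero_iff.2 (by linarith [norm_nonneg (a + G j a)])⟩, rfl⟩ hq)
  rintro x ⟨hxS, hxρ⟩
  obtain ⟨i, hi⟩ := mem_iUnion.1 (hS hxS)
  exact mem_iUnion.2
    ⟨i, graphOver_inter_closedBall_subset (hGperp i) _ ρ ⟨hi, ball_subset_closedBall hxρ⟩⟩

end Graph

theorem not_locallyLNE_of_tangent_intersect_general {n s : ℕ}
    (T : Fin s → Submodule ℝ (EuclideanSpace ℝ (Fin n)))
    (r : ℝ) (hr : 0 < r)
    (G : Fin s → EuclideanSpace ℝ (Fin n) → EuclideanSpace ℝ (Fin n))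
    (hGsmooth : ∀ j, ContDiff ℝ 1 (G j))
    (hGperp : ∀ j t, G j t ∈ (T j)ᗮ)
    (hG0 : ∀ j, G j 0 = 0)
    (hDG0 : ∀ j, fderiv ℝ (G j) 0 = 0)
    (N : Fin s → Set (EuclideanSpace ℝ (Fin n)))
    (hN : ∀ j, N j = (fun t => t + G j t) '' ((T j : Set (EuclideanSpace ℝ (Fin n))) ∩ Metric.ball 0 r))
    (hiso : ∀ j k, j ≠ k → N j ∩ N k ⊆ {0})
    (Y : Set (EuclideanSpace ℝ (Fin n))) (hY : Y = ⋃ j, N j)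
    (hjk : ∃ j k, j ≠ k ∧ T j ⊓ T k ≠ ⊥) :
    ∀ U : Set (EuclideanSpace ℝ (Fin n)), IsOpen U →
      (0 : EuclideanSpace ℝ (Fin n)) ∈ U → ¬ IsLNE (Y ∩ U) := by
  intro U hU hU0
  obtain ⟨j, k, hjk, hT⟩ := hjk
  obtain ⟨δ, hδ, hδU⟩ := Metric.isOpen_iff.1 hU 0 hU0
  obtain rfl : N = fun i => graphOver (T i) (G i) (ball 0 r) := funext hN
  subst hY
  have hGo : ∀ i, G i =o[𝓝 0] id := fun i => isLittleO_id_of_fderiv_eq_zero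
    ((hGsmooth i).differentiable one_ne_zero).differentiableAt (hG0 i) (hDG0 i)
  refine not_isLNE_of_forall_exists_dist_le fun ε hε => ?_
  obtain ⟨a, ha, ha0, ⟨⟨hGj, hGk⟩, hGjk⟩, hsmall⟩ := Submodule.exists_mem_ne_zero_of_eventually hT
    ((((hGo j).def one_pos).and ((hGo k).def one_pos)).and (((hGo j).sub (hGo k)).def hε) |>.and
      (ball_mem_nhds 0 (by positivity : 0 < min r δ / 3)))
  simp only [id, one_mul, dist_zero_right] at hGj hGk hGjk hsmall
  have har : 3 * ‖a‖ < r := by linarith [min_le_left r δ]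
  have haδ : 3 * ‖a‖ < δ := by linarith [min_le_right r δ]
  have hp : ‖a + G j a‖ ≤ 2 * ‖a‖ := (norm_add_le _ _).trans (by linarith)
  have hq : ‖a + G k a‖ ≤ 2 * ‖a‖ := (norm_add_le _ _).trans (by linarith)
  have hmem : ∀ i, a ∈ T i → a + G i a ∈ ⋃ i, graphOver (T i) (G i) (ball 0 r) := fun i hai =>
    mem_iUnion.2 ⟨i, a, ⟨hai, mem_ball_zero_iff.2 (by linarith)⟩, rfl⟩
  refine ⟨a + G j a, ⟨hmem j ha.1, hδU (mem_ball_zero_iff.2 (by linarith))⟩,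
    a + G k a, ⟨hmem k ha.2, hδU (mem_ball_zero_iff.2 (by linarith))⟩, ‖a‖, norm_pos_iff.2 ha0,
    ofReal_norm_le_innerDist_graphOver (fun i => (hGsmooth i).continuous) hGperp hiso
      inter_subset_left hjk ha.1 ha.2 ha0 (by linarith), ?_⟩
  rwa [dist_eq_norm, add_sub_add_left_eq_sub]

/-- a union of C¹ graph germs with an isolated singularity at the origin,
two of whose tangent spaces intersect nontrivially, is not locally LNE at 0. -/
theorem not_locallyLNE_of_tangent_intersect {n s : ℕ}
    (T : Fin s → Submodule ℝ (EuclideanSpace ℝ (Fin n)))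
    (hTdim : ∀ j, T j ≠ ⊥ ∧ T j ≠ ⊤)
    (r : ℝ) (hr : 0 < r)
    (G : Fin s → EuclideanSpace ℝ (Fin n) → EuclideanSpace ℝ (Fin n))
    (hGsmooth : ∀ j, ContDiff ℝ 1 (G j))
    (hGperp : ∀ j t, G j t ∈ (T j)ᗮ)
    (hG0 : ∀ j, G j 0 = 0)
    (hDG0 : ∀ j, fderiv ℝ (G j) 0 = 0)
    (N : Fin s → Set (EuclideanSpace ℝ (Fin n)))
    (hN : ∀ j, N j = (fun t => t + G j t) '' ((T j : Set (EuclideanSpace ℝ (Fin n))) ∩ Metric.ball 0 r))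
    (hiso : ∀ j k, j ≠ k → N j ∩ N k ⊆ {0})
    (Y : Set (EuclideanSpace ℝ (Fin n))) (hY : Y = ⋃ j, N j)
    (hjk : ∃ j k, j ≠ k ∧ T j ⊓ T k ≠ ⊥) :
    ∀ U : Set (EuclideanSpace ℝ (Fin n)), IsOpen U →
      (0 : EuclideanSpace ℝ (Fin n)) ∈ U → ¬ IsLNE (Y ∩ U) :=
  not_locallyLNE_of_tangent_intersect_general T r hr G hGsmooth hGperp hG0 hDG0 N hN hiso Y hY hjk
end

section
/- Let γ : [0,1] → ℂ \ {0} be a rectifiable loop (γ(0) = γ(1)) that is not null-homotopic in ℂ \ {0}. Then the length of γ is at least 2·|γ(0)|. -/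
open Set Metric

/-!
If `γ` never meets the ray `{c • z | c ≤ 0}` through the origin opposite to its base point `z`,
then it stays in the complement of that ray, which is star-convex about `z`, and the straight-line
homotopy to `z` contracts it inside `ℂ \ {0}`. So a loop that is not null-homotopic passes through
some `c • z` with `c ≤ 0`, at distance `(1 - c) ‖z‖ ≥ ‖z‖` from `z`; going there and coming back
costs at least `2 ‖z‖`.
-/

theorem eVariationOn.edist_add_edist_le {α E : Type*} [LinearOrder α] [PseudoEMetricSpace E]
    (f : α → E) {a t b : α} (hat : a ≤ t) (htb : t ≤ b) :
    edist (f a) (f t) + edist (f t) (f b) ≤ eVariationOn f (Icc a b) := by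
  rw [← Icc_union_Icc_eq_Icc hat htb, eVariationOn.union f (isGreatest_Icc hat) (isLeast_Icc htb)]
  exact add_le_add (eVariationOn.edist_le f (left_mem_Icc.2 hat) (right_mem_Icc.2 hat))
    (eVariationOn.edist_le f (left_mem_Icc.2 htb) (right_mem_Icc.2 htb))

theorem starConvex_compl_smul_Iic {𝕜 E : Type*} [Field 𝕜] [LinearOrder 𝕜] [IsStrictOrderedRing 𝕜]
    [AddCommGroup E] [Module 𝕜 E] {z : E} (hz : z ≠ 0) :
    StarConvex 𝕜 z ((fun c : 𝕜 => c • z) '' Iic 0)ᶜ := by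
  rintro w hw a b ha hb hab ⟨c, hc, hcw : c • z = a • z + b • w⟩
  rcases hb.eq_or_lt with rfl | hb
  · have : (1 - c) • z = 0 := by
      rw [sub_smul, one_smul, hcw]; simp [show a = 1 by simpa using hab]
    exact hz ((smul_eq_zero.1 this).resolve_left (by linarith [mem_Iic.1 hc]))
  · refine hw ⟨(c - a) / b, div_nonpos_of_nonpos_of_nonneg (by linarith [mem_Iic.1 hc]) hb.le, ?_⟩
    change ((c - a) / b) • z = w
    rw [div_eq_inv_mul, mul_smul, sub_smul, hcw, add_sub_cancel_left, smul_smul,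
      inv_mul_cancel₀ hb.ne', one_smul]

theorem Path.homotopic_refl_of_starConvex {E : Type*} [AddCommGroup E] [Module ℝ E]
    [TopologicalSpace E] [ContinuousAdd E] [ContinuousSMul ℝ E] {P : E → Prop} {s : Set E}
    {x : {w // P w}} (hs : StarConvex ℝ (x : E) s) (hsP : ∀ w ∈ s, P w) (γ : Path x x)
    (hγ : ∀ t, (γ t : E) ∈ s) : γ.Homotopic (Path.refl x) :=
  ⟨{ toFun := fun p => ⟨(p.1 : ℝ) • (x : E) + (1 - (p.1 : ℝ)) • (γ p.2 : E),
        hsP _ (hs (hγ p.2) p.1.2.1 (sub_nonneg.2 p.1.2.2) (add_sub_cancel _ _))⟩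
     continuous_toFun := by fun_prop
     map_zero_left := fun t => by ext; simp
     map_one_left := fun t => by ext; simp
     prop' := by
       rintro s t (rfl | rfl) <;> ext <;> simp [← add_smul] }⟩

theorem norm_le_norm_sub_smul_of_nonpos {E : Type*} [SeminormedAddCommGroup E] [NormedSpace ℝ E]
    (x : E) {c : ℝ} (hc : c ≤ 0) : ‖x‖ ≤ ‖x - c • x‖ := by
  rw [show x - c • x = (1 - c) • x by rw [sub_smul, one_smul], norm_smul,
    Real.norm_of_nonneg (by linarith)]
  exact le_mul_of_one_le_left (norm_nonneg _) (by linarith)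

/-- a rectifiable loop in ℂ \ {0} which is not null-homotopic has length
at least 2|γ(0)|. -/
theorem length_loop_ge {z : {w : ℂ // w ≠ 0}} (γ : Path z z)
    (hγ : ¬ Path.Homotopic γ (Path.refl z)) :
    ENNReal.ofReal (2 * ‖(z : ℂ)‖) ≤
      pathLength (fun t : ℝ => ((γ (Set.projIcc 0 1 zero_le_one t) : {w : ℂ // w ≠ 0}) : ℂ)) := by
  obtain ⟨t, c, hc, ht⟩ : ∃ t, ∃ c : ℝ, c ≤ 0 ∧ (γ t : ℂ) = c • (z : ℂ) := by
    by_contra! h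
    refine hγ (Path.homotopic_refl_of_starConvex (starConvex_compl_smul_Iic z.2) ?_ γ ?_)
    · rintro w hw rfl
      exact hw ⟨0, mem_Iic.2 le_rfl, zero_smul _ _⟩
    · rintro t ⟨c, hc, hct⟩
      exact h t c hc hct.symm
  have hz : ENNReal.ofReal ‖(z : ℂ)‖ ≤ edist (z : ℂ) (c • (z : ℂ)) := by
    rw [edist_dist, dist_eq_norm]
    exact ENNReal.ofReal_le_ofReal (norm_le_norm_sub_smul_of_nonpos _ hc)
  calc ENNReal.ofReal (2 * ‖(z : ℂ)‖)
      = ENNReal.ofReal ‖(z : ℂ)‖ + ENNReal.ofReal ‖(z : ℂ)‖ := by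
        rw [two_mul, ENNReal.ofReal_add (norm_nonneg _) (norm_nonneg _)]
    _ ≤ edist (z : ℂ) (c • (z : ℂ)) + edist (c • (z : ℂ)) (z : ℂ) :=
        add_le_add hz (edist_comm (z : ℂ) _ ▸ hz)
    _ ≤ _ := by
        simpa [pathLength, ht] using eVariationOn.edist_add_edist_le
          (fun t : ℝ => ((γ (Set.projIcc 0 1 zero_le_one t) : {w : ℂ // w ≠ 0}) : ℂ)) t.2.1 t.2.2
end

section
/- Let G : {z ∈ ℂ : |z| ≥ R₁} → ℂ^{n−1} be holomorphic (on a neighbourhood of this set) with G(z) → a and G'(z) → 0 as |z| → ∞. Then for every ε > 0 there exists r_ε ≥ R₁ such that G is ε-Lipschitz on {z : |z| ≥ r_ε}: |G(z) − G(w)| ≤ ε·|z − w| for all z, w with |z|, |w| ≥ r_ε. -/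
open Set Metric

/-!
Fix `ρ` so large that `‖G'‖ ≤ ε` on `{‖u‖ ≥ ρ}`, and then `r ≥ 2ρ` so large that
`‖G - a‖ ≤ ερ/2` on `{‖u‖ ≥ r}`. For `‖z‖, ‖w‖ ≥ r`, if `‖z - w‖ ≤ ρ` the segment `[w, z]` stays
in `{‖u‖ ≥ ρ}` and the mean value inequality applies; otherwise
`‖G z - G w‖ ≤ ‖G z - a‖ + ‖G w - a‖ ≤ ερ < ε‖z - w‖`.
-/

open Filter Bornology

theorem eventually_atTop_forall_le_norm {E : Type*} [NormedAddCommGroup E] {p : E → Prop}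
    (h : ∀ᶠ x in cobounded E, p x) : ∀ᶠ r in atTop, ∀ x, r ≤ ‖x‖ → p x := by
  obtain ⟨r₀, -, hr₀⟩ := hasBasis_cobounded_norm.eventually_iff.mp h
  filter_upwards [eventually_ge_atTop r₀] with r hr x hx using hr₀ (hr.trans hx)

theorem le_norm_of_mem_segment {E : Type*} [NormedAddCommGroup E] [NormedSpace ℝ E]
    {z w u : E} {ρ : ℝ} (hz : 2 * ρ ≤ ‖z‖) (hzw : ‖w - z‖ ≤ ρ) (hu : u ∈ segment ℝ z w) :
    ρ ≤ ‖u‖ := by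
  have huz : ‖u - z‖ ≤ ρ := (norm_sub_le_of_mem_segment hu).trans hzw
  linarith [norm_sub_norm_le z u, norm_sub_rev z u]

section LipschitzOutsideBall

variable {𝕜 F : Type*} [RCLike 𝕜] [NormedAddCommGroup F] [NormedSpace 𝕜 F]
  {f : 𝕜 → F} {ε ρ : ℝ}

theorem norm_sub_le_of_norm_deriv_le_outside_ball
    (hf : ∀ u, ρ ≤ ‖u‖ → DifferentiableAt 𝕜 f u) (hf' : ∀ u, ρ ≤ ‖u‖ → ‖deriv f u‖ ≤ ε)
    {z w : 𝕜} (hz : 2 * ρ ≤ ‖z‖) (hzw : ‖z - w‖ ≤ ρ) :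
    ‖f z - f w‖ ≤ ε * ‖z - w‖ := by
  have hseg : ∀ u ∈ segment ℝ z w, ρ ≤ ‖u‖ := fun u hu =>
    le_norm_of_mem_segment hz (by rwa [norm_sub_rev]) hu
  rw [norm_sub_rev, norm_sub_rev z]
  exact (convex_segment z w).norm_image_sub_le_of_norm_deriv_le
    (fun u hu => hf u (hseg u hu)) (fun u hu => hf' u (hseg u hu))
    (left_mem_segment ℝ z w) (right_mem_segment ℝ z w)

theorem norm_sub_le_of_norm_deriv_le_of_near_limit {a : F} (hε : 0 ≤ ε)
    (hf : ∀ u, ρ ≤ ‖u‖ → DifferentiableAt 𝕜 f u) (hf' : ∀ u, ρ ≤ ‖u‖ → ‖deriv f u‖ ≤ ε)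
    {z w : 𝕜} (hz : 2 * ρ ≤ ‖z‖) (hza : ‖f z - a‖ ≤ ε * ρ / 2) (hwa : ‖f w - a‖ ≤ ε * ρ / 2) :
    ‖f z - f w‖ ≤ ε * ‖z - w‖ := by
  rcases le_or_gt ‖z - w‖ ρ with hnear | hfar
  · exact norm_sub_le_of_norm_deriv_le_outside_ball hf hf' hz hnear
  · calc ‖f z - f w‖ ≤ ‖f z - a‖ + ‖f w - a‖ := by
          simpa only [dist_eq_norm] using dist_triangle_right (f z) (f w) a
      _ ≤ ε * ρ := by linarith
      _ ≤ ε * ‖z - w‖ := by gcongr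

end LipschitzOutsideBall

/-- a holomorphic map on a neighbourhood of {|z| ≥ R₁} with G → a and
G' → 0 at infinity is ε-Lipschitz outside a large enough disk, for every ε > 0. -/
theorem eventually_eps_lipschitz {F : Type*} [NormedAddCommGroup F] [NormedSpace ℂ F]
    (R₁ : ℝ) (G : ℂ → F) (a : F)
    (hG : ∀ z : ℂ, R₁ ≤ ‖z‖ → DifferentiableAt ℂ G z)
    (hGa : Filter.Tendsto G (Bornology.cobounded ℂ) (nhds a))
    (hG' : Filter.Tendsto (deriv G) (Bornology.cobounded ℂ) (nhds 0)) :
    ∀ ε : ℝ, 0 < ε → ∃ r : ℝ, R₁ ≤ r ∧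
      ∀ z w : ℂ, r ≤ ‖z‖ → r ≤ ‖w‖ → ‖G z - G w‖ ≤ ε * ‖z - w‖ := by
  intro ε hε
  have hderiv : ∀ᶠ u in cobounded ℂ, ‖deriv G u‖ ≤ ε := by
    simpa only [dist_zero_right] using hG'.eventually (closedBall_mem_nhds 0 hε)
  obtain ⟨ρ, hρ, hR₁ρ, hρ'⟩ := ((eventually_gt_atTop 0).and
    ((eventually_ge_atTop R₁).and (eventually_atTop_forall_le_norm hderiv))).exists
  have hlimit : ∀ᶠ u in cobounded ℂ, ‖G u - a‖ ≤ ε * ρ / 2 := by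
    simpa only [dist_eq_norm] using hGa.eventually (closedBall_mem_nhds a (by positivity))
  obtain ⟨r, h2ρr, hr⟩ :=
    ((eventually_ge_atTop (2 * ρ)).and (eventually_atTop_forall_le_norm hlimit)).exists
  refine ⟨r, by linarith, fun z w hz hw => ?_⟩
  exact norm_sub_le_of_norm_deriv_le_of_near_limit hε.le
    (fun u hu => hG u (hR₁ρ.trans hu)) hρ' (h2ρr.trans hz) (hr z hz) (hr w hw)
end

section
/- Let S ⊆ M × P (product of metric spaces with sum distance) be the graph of a K-Lipschitz function F : T → P over a subset T of M, where T is LNE with constant L. Then S is LNE with constant at most L·(1+K). -/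
open Set Metric

/-!
The graph map `m ↦ (m, F m)` is `(1 + K)`-Lipschitz and does not decrease distances. Composing
with it sends a path of length `ℓ` in `T` to a path of length at most `(1 + K) ℓ` in the graph,
so for `a, b ∈ T`
`d_inn((a, F a), (b, F b)) ≤ (1 + K) d_inn(a, b) ≤ (1 + K) L d(a, b) ≤ L (1 + K) d((a, F a), (b, F b))`.
-/

open scoped NNReal

theorem innerDist_le_mul_of_lipschitzOnWith {M N : Type*}
    [PseudoEMetricSpace M] [PseudoEMetricSpace N] {S : Set M} {S' : Set N} {f : M → N} {C : ℝ≥0}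
    (hC : C ≠ 0) (hf : LipschitzOnWith C f S) (hfS : MapsTo f S S') (x y : M) :
    innerDist S' (f x) (f y) ≤ C * innerDist S x y := by
  have hC' : (C : ENNReal) ≠ 0 := ENNReal.coe_ne_zero.mpr hC
  rw [mul_comm, ← ENNReal.div_le_iff_le_mul (.inl hC') (.inl ENNReal.coe_ne_top)]
  refine le_sInf ?_
  rintro _ ⟨γ, hγ, hγS, rfl, rfl, rfl⟩
  rw [ENNReal.div_le_iff_le_mul (.inl hC') (.inl ENNReal.coe_ne_top), mul_comm]
  calc innerDist S' (f (γ 0)) (f (γ 1)) ≤ pathLength (f ∘ γ) :=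
        sInf_le ⟨f ∘ γ, hf.continuousOn.comp hγ hγS, hfS.comp hγS, rfl, rfl, rfl⟩
    _ ≤ C * pathLength γ := hf.comp_eVariationOn_le hγS

theorem IsLNEWith.image {M N : Type*} [PseudoMetricSpace M] [PseudoMetricSpace N]
    {T : Set M} {L : ℝ} {f : M → N} {C : ℝ≥0} (hT : IsLNEWith L T) (hC : C ≠ 0)
    (hf : LipschitzOnWith C f T) (hexp : ∀ x ∈ T, ∀ y ∈ T, dist x y ≤ dist (f x) (f y)) :
    IsLNEWith (L * C) (f '' T) := by
  rintro _ ⟨x, hx, rfl⟩ _ ⟨y, hy, rfl⟩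
  -- for `L < 0` both sides of `hLd` vanish
  have hLd : ENNReal.ofReal (L * dist x y) ≤ ENNReal.ofReal (L * dist (f x) (f y)) := by
    rcases le_or_gt 0 L with hL | hL
    · exact ENNReal.ofReal_le_ofReal (mul_le_mul_of_nonneg_left (hexp x hx y hy) hL)
    · rw [ENNReal.ofReal_of_nonpos (mul_nonpos_of_nonpos_of_nonneg hL.le dist_nonneg)]
      exact bot_le
  calc innerDist (f '' T) (f x) (f y) ≤ C * innerDist T x y :=
        innerDist_le_mul_of_lipschitzOnWith hC hf (mapsTo_image f T) x y
    _ ≤ C * ENNReal.ofReal (L * dist (f x) (f y)) := by gcongr; exact (hT hx hy).trans hLd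
    _ = ENNReal.ofReal (L * C * dist (f x) (f y)) := by
        rw [← ENNReal.ofReal_coe_nnreal, ← ENNReal.ofReal_mul C.coe_nonneg]
        congr 1
        ring

section Graph

variable {M P : Type*}

def graphL1 (F : M → P) (m : M) : WithLp 1 (M × P) := WithLp.toLp 1 (m, F m)

theorem setOf_graph_eq_image_graphL1 (F : M → P) (T : Set M) :
    {q : WithLp 1 (M × P) | (WithLp.equiv 1 (M × P) q).1 ∈ T ∧
      (WithLp.equiv 1 (M × P) q).2 = F (WithLp.equiv 1 (M × P) q).1} = graphL1 F '' T := by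
  ext q
  constructor
  · rintro ⟨hq, hqF⟩
    exact ⟨q.fst, hq, WithLp.ofLp_injective 1 (Prod.ext rfl hqF.symm)⟩
  · rintro ⟨m, hm, rfl⟩
    exact ⟨hm, rfl⟩

variable [PseudoMetricSpace M] [PseudoMetricSpace P]

theorem edist_graphL1 (F : M → P) (u v : M) :
    edist (graphL1 F u) (graphL1 F v) = edist u v + edist (F u) (F v) := by
  simp [graphL1, WithLp.prod_edist_eq_add (p := 1) (by simp)]

theorem dist_le_dist_graphL1 (F : M → P) (u v : M) :
    dist u v ≤ dist (graphL1 F u) (graphL1 F v) := by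
  simp [graphL1, WithLp.prod_dist_eq_add (p := 1) (by simp)]

theorem LipschitzOnWith.graphL1 {F : M → P} {K : ℝ≥0} {T : Set M}
    (hF : LipschitzOnWith K F T) :
    LipschitzOnWith (1 + K) (graphL1 F) T := by
  intro u hu v hv
  rw [edist_graphL1, ENNReal.coe_add, ENNReal.coe_one, add_mul, one_mul]
  gcongr
  exact hF hu hv

end Graph

theorem graph_isLNEWith_general {M P : Type*} [MetricSpace M] [MetricSpace P]
    (T : Set M) (L : ℝ) (hT : IsLNEWith L T)
    (F : M → P) (K : ℝ) (hK : 0 ≤ K)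
    (hF : ∀ x ∈ T, ∀ y ∈ T, dist (F x) (F y) ≤ K * dist x y) :
    IsLNEWith (L * (1 + K))
      {q : WithLp 1 (M × P) |
        (WithLp.equiv 1 (M × P) q).1 ∈ T ∧
        (WithLp.equiv 1 (M × P) q).2 = F (WithLp.equiv 1 (M × P) q).1} := by
  have hFK : LipschitzOnWith K.toNNReal F T :=
    .of_dist_le_mul fun x hx y hy => by simpa [Real.coe_toNNReal K hK] using hF x hx y hy
  have hLNE := hT.image (by positivity) hFK.graphL1 fun x _ y _ => dist_le_dist_graphL1 F x y
  rwa [setOf_graph_eq_image_graphL1, ← Real.coe_toNNReal K hK, ← NNReal.coe_one,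
    ← NNReal.coe_add]

/-- the graph of a K-Lipschitz map over a set which is LNE with constant L
is LNE with constant at most L(1+K) in the product with the sum distance. -/
theorem graph_isLNEWith {M P : Type*} [MetricSpace M] [MetricSpace P]
    (T : Set M) (L : ℝ) (hL : 1 ≤ L) (hT : IsLNEWith L T)
    (F : M → P) (K : ℝ) (hK : 0 ≤ K)
    (hF : ∀ x ∈ T, ∀ y ∈ T, dist (F x) (F y) ≤ K * dist x y) :
    IsLNEWith (L * (1 + K))
      {q : WithLp 1 (M × P) |
        (WithLp.equiv 1 (M × P) q).1 ∈ T ∧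
        (WithLp.equiv 1 (M × P) q).2 = F (WithLp.equiv 1 (M × P) q).1} :=
  graph_isLNEWith_general T L hT F K hK hF
end

section
/- Let C₁, C₂ be disjoint closed subsets of ℝ^n, let K be a compact set, and suppose S = C₁ ∪ C₂ ∪ K with every path in S from C₁ \ K to C₂ \ K passing through K. Suppose there are sequences (x_l) ⊆ C₁ and (x_l') ⊆ C₂ with |x_l|, |x_l'| → ∞ and |x_l − x_l'| = o(|x_l|). Then S is not LNE. -/
open Set Metric

/-!
Any path in `S` from a far point `x` of `C₁` to a far point `x'` of `C₂` must visit the compact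
set `K`, hence has length at least `dist(x, K) + dist(x', K) ≥ ‖x‖ - R`, where `K ⊆ B(0, R)`.
An LNE constant `L` would bound this by `L‖x - x'‖ = o(‖x‖)`, which is absurd as `‖x‖ → ∞`.
-/

open Filter Asymptotics

section PseudoEMetricSpace

variable {M : Type*} [PseudoEMetricSpace M]

theorem edist_add_edist_le_pathLength (γ : ℝ → M) {t : ℝ} (ht : t ∈ Icc 0 1) :
    edist (γ 0) (γ t) + edist (γ t) (γ 1) ≤ pathLength γ := by
  have h0 : (0 : ℝ) ∈ Icc 0 1 := ⟨le_rfl, zero_le_one⟩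
  have h1 : (1 : ℝ) ∈ Icc 0 1 := ⟨zero_le_one, le_rfl⟩
  rw [pathLength, ← inter_self (Icc (0 : ℝ) 1), ← eVariationOn.Icc_add_Icc γ ht.1 ht.2 ht]
  exact add_le_add (eVariationOn.edist_le γ ⟨h0, le_rfl, ht.1⟩ ⟨ht, ht.1, le_rfl⟩)
    (eVariationOn.edist_le γ ⟨ht, le_rfl, ht.2⟩ ⟨h1, ht.2, le_rfl⟩)

theorem infEDist_add_infEDist_le_innerDist {S K : Set M} {x y : M}
    (hK : ∀ γ : ℝ → M, ContinuousOn γ (Icc 0 1) → MapsTo γ (Icc 0 1) S →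
      γ 0 = x → γ 1 = y → ∃ t ∈ Icc (0 : ℝ) 1, γ t ∈ K) :
    infEDist x K + infEDist y K ≤ innerDist S x y := by
  refine le_sInf ?_
  rintro _ ⟨γ, hcont, hmaps, rfl, rfl, rfl⟩
  obtain ⟨t, ht, htK⟩ := hK γ hcont hmaps rfl rfl
  calc infEDist (γ 0) K + infEDist (γ 1) K ≤ edist (γ 0) (γ t) + edist (γ t) (γ 1) := by
        rw [edist_comm (γ t)]
        exact add_le_add (infEDist_le_edist_of_mem htK) (infEDist_le_edist_of_mem htK)
    _ ≤ pathLength γ := edist_add_edist_le_pathLength γ ht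

end PseudoEMetricSpace

section PseudoMetricSpace

variable {M : Type*} [PseudoMetricSpace M]

theorem ofReal_dist_sub_le_infEDist {K : Set M} {c : M} {R : ℝ} (hK : K ⊆ closedBall c R)
    (x : M) : ENNReal.ofReal (dist x c - R) ≤ infEDist x K := by
  refine le_infEDist.2 fun y hy => ?_
  rw [edist_dist]
  exact ENNReal.ofReal_le_ofReal <| by linarith [dist_triangle x y c, mem_closedBall.1 (hK hy)]

theorem not_isLNEWith_of_isLittleO {ι : Type*} {l : Filter ι} [l.NeBot] {S : Set M} {L : ℝ}
    {x y : ι → M} (hx : ∀ i, x i ∈ S) (hy : ∀ i, y i ∈ S) {g : ι → ℝ}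
    (hg : Tendsto g l atTop) (hle : ∀ᶠ i in l, ENNReal.ofReal (g i) ≤ innerDist S (x i) (y i))
    (ho : (fun i => dist (x i) (y i)) =o[l] g) : ¬ IsLNEWith L S := by
  intro hL
  have hbound : ∀ᶠ i in l, ‖g i‖ ≤ |L| * ‖dist (x i) (y i)‖ := by
    filter_upwards [hle, hg.eventually_ge_atTop 0] with i hi hgi
    rw [Real.norm_of_nonneg hgi, Real.norm_of_nonneg dist_nonneg]
    rcases ENNReal.ofReal_le_ofReal_iff'.1 (hi.trans (hL (hx i) (hy i))) with h | h
    · exact h.trans (mul_le_mul_of_nonneg_right (le_abs_self L) dist_nonneg)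
    · exact h.trans (by positivity)
  exact isLittleO_irrefl ((hg.eventually_gt_atTop 0).frequently.mono fun _ h => h.ne')
    ((IsBigO.of_bound _ hbound).trans_isLittleO ho)

end PseudoMetricSpace

theorem not_LNE_of_two_branches_general {n : ℕ}
    (C₁ C₂ K S : Set (EuclideanSpace ℝ (Fin n)))
    (hK : IsCompact K) (hS : S = C₁ ∪ C₂ ∪ K)
    (hpass : ∀ γ : ℝ → EuclideanSpace ℝ (Fin n),
      ContinuousOn γ (Set.Icc 0 1) → Set.MapsTo γ (Set.Icc 0 1) S →
      γ 0 ∈ C₁ \ K → γ 1 ∈ C₂ \ K → ∃ t ∈ Set.Icc (0 : ℝ) 1, γ t ∈ K)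
    (x x' : ℕ → EuclideanSpace ℝ (Fin n))
    (hx : ∀ l, x l ∈ C₁) (hx' : ∀ l, x' l ∈ C₂)
    (hnorm : Filter.Tendsto (fun l => ‖x l‖) Filter.atTop Filter.atTop)
    (hnorm' : Filter.Tendsto (fun l => ‖x' l‖) Filter.atTop Filter.atTop)
    (hlittle : (fun l => ‖x l - x' l‖) =o[Filter.atTop] fun l => ‖x l‖) :
    ¬ IsLNE S := by
  rintro ⟨L, -, hL⟩
  obtain ⟨R, hR⟩ := hK.isBounded.subset_closedBall 0
  have hfar : ∀ᶠ l in atTop, x l ∉ K ∧ x' l ∉ K :=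
    (tendsto_norm_atTop_iff_cobounded.1 hnorm).eventually hK.isBounded |>.and
      ((tendsto_norm_atTop_iff_cobounded.1 hnorm').eventually hK.isBounded)
  have hequiv : (fun l => ‖x l‖ - R) ~[atTop] fun l => ‖x l‖ := by
    simpa only [sub_eq_add_neg] using
      IsEquivalent.refl.add_const_of_norm_tendsto_atTop (tendsto_norm_atTop_atTop.comp hnorm)
  have hlower : ∀ᶠ l in atTop, ENNReal.ofReal (‖x l‖ - R) ≤ innerDist S (x l) (x' l) := by
    filter_upwards [hfar] with l ⟨hxK, hx'K⟩
    calc ENNReal.ofReal (‖x l‖ - R) ≤ infEDist (x l) K := by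
          simpa only [dist_zero_right] using ofReal_dist_sub_le_infEDist hR (x l)
      _ ≤ infEDist (x l) K + infEDist (x' l) K := le_self_add
      _ ≤ innerDist S (x l) (x' l) := infEDist_add_infEDist_le_innerDist fun γ hc hm h0 h1 =>
          hpass γ hc hm (h0 ▸ ⟨hx l, hxK⟩) (h1 ▸ ⟨hx' l, hx'K⟩)
  exact not_isLNEWith_of_isLittleO (g := fun l => ‖x l‖ - R)
    (fun l => hS ▸ mem_union_left _ (mem_union_left _ (hx l)))
    (fun l => hS ▸ mem_union_left _ (mem_union_right _ (hx' l)))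
    (tendsto_atTop_add_const_right _ _ hnorm) hlower
    (by simpa only [dist_eq_norm] using hlittle.trans_isBigO hequiv.symm.isBigO) hL

/-- if S = C₁ ∪ C₂ ∪ K with K compact, every path in S from C₁ \ K to
C₂ \ K passing through K, and there are sequences going to infinity in C₁ and C₂ with
|x_l − x_l'| = o(|x_l|), then S is not LNE. -/
theorem not_LNE_of_two_branches {n : ℕ}
    (C₁ C₂ K S : Set (EuclideanSpace ℝ (Fin n)))
    (h1 : IsClosed C₁) (h2 : IsClosed C₂) (hdisj : Disjoint C₁ C₂)
    (hK : IsCompact K) (hS : S = C₁ ∪ C₂ ∪ K)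
    (hpass : ∀ γ : ℝ → EuclideanSpace ℝ (Fin n),
      ContinuousOn γ (Set.Icc 0 1) → Set.MapsTo γ (Set.Icc 0 1) S →
      γ 0 ∈ C₁ \ K → γ 1 ∈ C₂ \ K → ∃ t ∈ Set.Icc (0 : ℝ) 1, γ t ∈ K)
    (x x' : ℕ → EuclideanSpace ℝ (Fin n))
    (hx : ∀ l, x l ∈ C₁) (hx' : ∀ l, x' l ∈ C₂)
    (hnorm : Filter.Tendsto (fun l => ‖x l‖) Filter.atTop Filter.atTop)
    (hnorm' : Filter.Tendsto (fun l => ‖x' l‖) Filter.atTop Filter.atTop)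
    (hlittle : (fun l => ‖x l - x' l‖) =o[Filter.atTop] fun l => ‖x l‖) :
    ¬ IsLNE S :=
  not_LNE_of_two_branches_general C₁ C₂ K S hK hS hpass x x' hx hx' hnorm hnorm' hlittle
end
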